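/- Let f(x) = (1/2)‖y − Ax‖₂² + λ·TV(x) where TV(x) = Σᵢ ‖Dᵢx‖₂ and the common kernel of all Dᵢ is span{1}. If 1 ∉ ker(A), then f is coercive on ℝⁿ and its set of minimizers is nonempty. -/

import Mathlib

/-!
The data term grows linearly in `‖A x‖`, since `½‖y - u‖² ≥ ‖u‖ - ‖y‖ - ½`, so
`f x ≥ min 1 λ · (‖A x‖ + Σᵢ ‖Dᵢ x‖) - ‖y‖ - ½`. The map `x ↦ (A x, (Dᵢ x)ᵢ)` is injective:
a vector killed by every `Dᵢ` is `α • 1`, and `A (α • 1) = 0` forces `α = 0`. In finite dimension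
an injective linear map is antilipschitz, so `‖A x‖ + Σᵢ ‖Dᵢ x‖ ≥ c ‖x‖` for some `c > 0` and `f`
is coercive; being continuous on a proper space, it attains its minimum.
-/

open Matrix Filter

theorem tendsto_cocompact_atTop_of_linear_lower_bound {E : Type*} [SeminormedAddGroup E]
    [ProperSpace E] {f : E → ℝ} {a b : ℝ} (ha : 0 < a) (hf : ∀ x, a * ‖x‖ - b ≤ f x) :
    Tendsto f (cocompact E) atTop :=
  tendsto_atTop_mono hf <|
    tendsto_atTop_add_const_right _ (-b) (tendsto_norm_cocompact_atTop.const_mul_atTop ha)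

theorem norm_sub_norm_sub_half_le_half_norm_sub_sq {F : Type*} [SeminormedAddCommGroup F]
    (u y : F) :
    ‖u‖ - ‖y‖ - 1 / 2 ≤ 1 / 2 * ‖y - u‖ ^ 2 := by
  nlinarith [norm_sub_norm_le u y, norm_sub_rev u y, sq_nonneg (‖y - u‖ - 1)]

section TVObjective

variable {E F : Type*} [NormedAddCommGroup E] [NormedSpace ℝ E] [FiniteDimensional ℝ E]
  [NormedAddCommGroup F] [NormedSpace ℝ F]
  {ι : Type*} [Fintype ι] {G : ι → Type*} [∀ i, NormedAddCommGroup (G i)] [∀ i, NormedSpace ℝ (G i)]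

theorem exists_pos_mul_norm_le_norm_add_sum_norm (A : E →ₗ[ℝ] F) (D : ∀ i, E →ₗ[ℝ] G i)
    (hker : ∀ x, A x = 0 → (∀ i, D i x = 0) → x = 0) :
    ∃ c > 0, ∀ x, c * ‖x‖ ≤ ‖A x‖ + ∑ i, ‖D i x‖ := by
  let L := A.prod (LinearMap.pi D)
  have hL : LinearMap.ker L = ⊥ := LinearMap.ker_eq_bot'.mpr fun x hx ↦
    hker x (congrArg Prod.fst hx) fun i ↦ congrFun (congrArg Prod.snd hx) i
  obtain ⟨K, hK, hanti⟩ := L.exists_antilipschitzWith hL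
  refine ⟨(K : ℝ)⁻¹, by positivity, fun x ↦ ?_⟩
  have hpi : ‖fun i ↦ D i x‖ ≤ ∑ i, ‖D i x‖ :=
    (pi_norm_le_iff_of_nonneg (by positivity)).mpr fun i ↦
      Finset.single_le_sum (fun j _ ↦ norm_nonneg (D j x)) (Finset.mem_univ i)
  have hLx : ‖L x‖ ≤ ‖A x‖ + ∑ i, ‖D i x‖ := by
    rw [Prod.norm_def]
    exact max_le (le_add_of_nonneg_right (by positivity))
      (hpi.trans (le_add_of_nonneg_left (norm_nonneg _)))
  rw [inv_mul_le_iff₀ (by exact_mod_cast hK)]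
  exact (ZeroHomClass.bound_of_antilipschitz L hanti x).trans (by gcongr)

noncomputable def tvObjective (A : E →ₗ[ℝ] F) (D : ∀ i, E →ₗ[ℝ] G i) (y : F) (lam : ℝ) (x : E) :
    ℝ :=
  1 / 2 * ‖y - A x‖ ^ 2 + lam * ∑ i, ‖D i x‖

variable (A : E →ₗ[ℝ] F) (D : ∀ i, E →ₗ[ℝ] G i) (y : F) (lam : ℝ)

theorem continuous_tvObjective : Continuous (tvObjective A D y lam) := by
  have hA := A.continuous_of_finiteDimensional
  have hD := fun i ↦ (D i).continuous_of_finiteDimensional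
  unfold tvObjective
  fun_prop

theorem tendsto_tvObjective_cocompact (hlam : 0 < lam)
    (hker : ∀ x, A x = 0 → (∀ i, D i x = 0) → x = 0) :
    Tendsto (tvObjective A D y lam) (cocompact E) atTop := by
  obtain ⟨c, hc, hbound⟩ := exists_pos_mul_norm_le_norm_add_sum_norm A D hker
  set μ := min 1 lam
  have hμ : 0 < μ := lt_min one_pos hlam
  refine tendsto_cocompact_atTop_of_linear_lower_bound (mul_pos hμ hc) (b := ‖y‖ + 1 / 2)
    fun x ↦ ?_
  have hμA : μ * ‖A x‖ ≤ ‖A x‖ := mul_le_of_le_one_left (norm_nonneg _) (min_le_left 1 lam)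
  have hμD : μ * ∑ i, ‖D i x‖ ≤ lam * ∑ i, ‖D i x‖ := by gcongr; exact min_le_right 1 lam
  calc μ * c * ‖x‖ - (‖y‖ + 1 / 2)
      ≤ μ * (‖A x‖ + ∑ i, ‖D i x‖) - (‖y‖ + 1 / 2) := by rw [mul_assoc]; gcongr; exact hbound x
    _ ≤ (‖A x‖ - ‖y‖ - 1 / 2) + lam * ∑ i, ‖D i x‖ := by linarith
    _ ≤ tvObjective A D y lam x := by
      grw [tvObjective, norm_sub_norm_sub_half_le_half_norm_sub_sq (A x) y]

end TVObjective

theorem Matrix.eq_zero_of_mulVec_eq_zero_of_common_ker_le_const {ι κ r s : Type*} [Fintype κ]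
    [Fintype s] (A : Matrix r κ ℝ) (D : ι → Matrix s κ ℝ)
    (hker : ∀ x : κ → ℝ, (∀ i, D i *ᵥ x = 0) → ∃ α : ℝ, x = fun _ => α)
    (hA : A *ᵥ (fun _ => 1) ≠ 0) {x : κ → ℝ} (hAx : A *ᵥ x = 0) (hDx : ∀ i, D i *ᵥ x = 0) :
    x = 0 := by
  obtain ⟨α, rfl⟩ := hker x hDx
  have hα : α • A *ᵥ (fun _ => 1) = 0 := by
    rw [← mulVec_smul]
    convert hAx using 2
    ext
    simp
  obtain rfl := (smul_eq_zero.mp hα).resolve_right hA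
  rfl

/-- The TV-regularized objective `f x = (1/2)‖y − A x‖² + λ Σᵢ ‖Dᵢ x‖₂`, where the
common kernel of the `Dᵢ` is the span of the all-ones vector and `1 ∉ ker A`, is
coercive and its set of minimizers is nonempty. -/
theorem tv_objective_has_minimizer (m n N : ℕ) (lam : ℝ) (hlam : 0 < lam)
    (A : Matrix (Fin m) (Fin N) ℝ) (y : Fin m → ℝ)
    (D : Fin n → Matrix (Fin 2) (Fin N) ℝ)
    (hker : ∀ x : Fin N → ℝ, (∀ i, (D i).mulVec x = 0) ↔ ∃ α : ℝ, x = fun _ => α)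
    (hA : A.mulVec (fun _ => 1) ≠ 0) :
    let f : EuclideanSpace ℝ (Fin N) → ℝ :=
      fun x => (1 / 2) * ∑ i, (y i - A.mulVec (fun j => x j) i) ^ 2
        + lam * ∑ i, Real.sqrt (∑ j, ((D i).mulVec (fun j => x j) j) ^ 2)
    Tendsto f (cocompact (EuclideanSpace ℝ (Fin N))) atTop ∧
    ∃ x, ∀ w, f x ≤ f w := by
  intro f
  have hf : f = tvObjective (toLpLin 2 2 A) (fun i ↦ toLpLin 2 2 (D i)) (WithLp.toLp 2 y) lam := by
    funext x
    rw [tvObjective, EuclideanSpace.real_norm_sq_eq]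
    simp only [EuclideanSpace.norm_eq, toLpLin_apply, WithLp.ofLp_sub, Pi.sub_apply,
      Real.norm_eq_abs, sq_abs]
    rfl
  have hinj : ∀ x, toLpLin 2 2 A x = 0 → (∀ i, toLpLin 2 2 (D i) x = 0) → x = 0 :=
    fun x hAx hDx ↦ WithLp.ofLp_injective 2 <|
      eq_zero_of_mulVec_eq_zero_of_common_ker_le_const A D (fun x ↦ (hker x).mp) hA
        (congrArg WithLp.ofLp hAx) fun i ↦ congrArg WithLp.ofLp (hDx i)
  rw [hf]
  have hcoer := tendsto_tvObjective_cocompact _ _ (WithLp.toLp 2 y) lam hlam hinj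
  exact ⟨hcoer, (continuous_tvObjective _ _ _ _).exists_forall_le hcoer⟩
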